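/- arXiv:1908.06077 — 2 statements merged into one kernel-verified Lean document; each statement's English description precedes it below -/
import Mathlib

section
/- Let d ≥ 1 and s ≥ 1 be integers and let v ∈ ℝ^d be nonzero. The expected number of nonzero coordinates of the nonuniform quantization of v with the NUQSGD levels L̂ satisfies E[ #{i : Q_s(v)_i ≠ 0} ] ≤ 2^{2s} + 2^s √d. -/
open MeasureTheory Real

noncomputable section

/-- The index of the quantization bin containing the normalized coordinate `r`. -/
def levIdx (l : ℕ → ℝ) (s : ℕ) (r : ℝ) : ℕ := sSup {j | j ≤ s ∧ l j ≤ r}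

/-- The probability of rounding the normalized coordinate `r` up to the next level. -/
def quantP (l : ℕ → ℝ) (s : ℕ) (r : ℝ) : ℝ :=
  (r - l (levIdx l s r)) / (l (levIdx l s r + 1) - l (levIdx l s r))

/-- The (random) nonuniform quantization of `v`, driven by the uniform noise vector `u`:
coordinate `i` is `‖v‖ · sign vᵢ · hᵢ`, where `hᵢ` is the upper adjacent level with
probability `p(rᵢ)` and the lower adjacent level otherwise. -/
def quant (l : ℕ → ℝ) (s : ℕ) {d : ℕ} (v : EuclideanSpace ℝ (Fin d))
    (u : Fin d → ℝ) : EuclideanSpace ℝ (Fin d) :=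
  WithLp.toLp 2 fun i =>
    ‖v‖ * Real.sign (v i) *
      (if u i ≤ quantP l s (|v i| / ‖v‖)
       then l (levIdx l s (|v i| / ‖v‖) + 1)
       else l (levIdx l s (|v i| / ‖v‖)))

/-- The uniform probability measure on the cube `[0,1]^d`, driving the quantization noise. -/
def unifCube (d : ℕ) : Measure (Fin d → ℝ) :=
  Measure.pi fun _ => volume.restrict (Set.Icc (0:ℝ) 1)

/-- `l` is a valid sequence of quantization levels `l 0 = 0 < l 1 < ⋯ < l (s+1) = 1`. -/
def IsLevels (l : ℕ → ℝ) (s : ℕ) : Prop :=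
  l 0 = 0 ∧ l (s+1) = 1 ∧ ∀ j ≤ s, l j < l (j+1)

/-- The exponentially spaced NUQSGD levels `(0, 2^{-s}, 2^{1-s}, …, 2^{-1}, 1)`:
`l 0 = 0` and `l j = 2^{j-1-s}` for `j = 1, …, s+1`. -/
def nuqLevels (s : ℕ) : ℕ → ℝ :=
  fun j => if j = 0 then 0 else 2 ^ ((j : ℤ) - 1 - (s : ℤ))

/-! A normalized coordinate `rᵢ < l₁` is rounded to `l₀ = 0` or `l₁`, so it survives with
probability `rᵢ / l₁`. Hence the expected number of nonzero coordinates is at most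
`#{i | l₁ ≤ rᵢ} + (∑ rᵢ) / l₁`. As `∑ rᵢ² ≤ 1`, the first term is at most `1 / l₁²`,
and `∑ rᵢ ≤ √d` by Cauchy–Schwarz. The NUQSGD levels have `l₁ = 2⁻ˢ`. -/

namespace IsLevels

variable {l : ℕ → ℝ} {s : ℕ}

theorem le_of_le (hl : IsLevels l s) {i j : ℕ} (hij : i ≤ j) (hj : j ≤ s + 1) :
    l i ≤ l j := by
  induction j, hij using Nat.le_induction with
  | base => exact le_rfl
  | succ j _ ih => exact (ih (by omega)).trans (hl.2.2 j (by omega)).le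

theorem one_pos (hl : IsLevels l s) : 0 < l 1 := hl.1 ▸ hl.2.2 0 (Nat.zero_le s)

theorem levIdx_eq_zero (hl : IsLevels l s) {r : ℝ} (hr0 : 0 ≤ r) (hr : r < l 1) :
    levIdx l s r = 0 := by
  refine Nat.le_zero.mp (csSup_le ⟨0, Nat.zero_le s, hl.1 ▸ hr0⟩ ?_)
  rintro j ⟨hjs, hjr⟩
  by_contra hj
  linarith [hl.le_of_le (i := 1) (j := j) (by omega) (by omega)]

theorem quantP_eq_div (hl : IsLevels l s) {r : ℝ} (hr0 : 0 ≤ r) (hr : r < l 1) :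
    quantP l s r = r / l 1 := by
  simp only [quantP, hl.levIdx_eq_zero hr0 hr, hl.1, sub_zero, zero_add]

end IsLevels

instance isProbabilityMeasure_restrict_Icc_zero_one :
    IsProbabilityMeasure (volume.restrict (Set.Icc (0:ℝ) 1)) :=
  ⟨by simp⟩

instance (d : ℕ) : IsProbabilityMeasure (unifCube d) := by
  unfold unifCube
  infer_instance

theorem unifCube_real_eval_preimage_Iic_le {d : ℕ} (i : Fin d) {p : ℝ} (hp : 0 ≤ p) :
    (unifCube d).real (Function.eval i ⁻¹' Set.Iic p) ≤ p := by
  rw [unifCube, measureReal_def,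
    (measurePreserving_eval _ i).measure_preimage measurableSet_Iic.nullMeasurableSet,
    Measure.restrict_apply measurableSet_Iic]
  refine ENNReal.toReal_le_of_le_ofReal hp ?_
  calc volume (Set.Iic p ∩ Set.Icc 0 1) ≤ volume (Set.Icc 0 p) :=
        measure_mono fun x hx => ⟨hx.2.1, hx.1⟩
    _ = ENNReal.ofReal p := by rw [Real.volume_Icc, sub_zero]

theorem integral_ncard_eq_sum_measureReal {α ι : Type*} [MeasurableSpace α] [Fintype ι]
    {μ : Measure α} [IsFiniteMeasure μ] {A : ι → Set α} (hA : ∀ i, MeasurableSet (A i)) :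
    ∫ x, ({i | x ∈ A i}.ncard : ℝ) ∂μ = ∑ i, μ.real (A i) := by
  classical
  have hcard : ∀ x, ({i | x ∈ A i}.ncard : ℝ) = ∑ i, (A i).indicator 1 x := by
    intro x
    rw [Set.ncard_eq_toFinset_card', Set.toFinset_ofPred, Finset.card_filter]
    push_cast
    simp only [Set.indicator_apply, Pi.one_apply]
  simp_rw [hcard]
  rw [integral_finsetSum _ fun i _ => (integrable_const 1).indicator (hA i)]
  simp_rw [integral_indicator_one (hA _)]

theorem measurableSet_quant_ne_zero (l : ℕ → ℝ) (s : ℕ) {d : ℕ}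
    (v : EuclideanSpace ℝ (Fin d)) (i : Fin d) : MeasurableSet {u | quant l s v u i ≠ 0} := by
  have hmeas : Measurable fun u => quant l s v u i :=
    (Measurable.ite (measurableSet_le (measurable_pi_apply i) measurable_const)
      measurable_const measurable_const).const_mul _
  exact hmeas (measurableSet_singleton 0).compl

theorem unifCube_real_quant_ne_zero_le {l : ℕ → ℝ} {s d : ℕ} (hl : IsLevels l s)
    (v : EuclideanSpace ℝ (Fin d)) (i : Fin d) :
    (unifCube d).real {u | quant l s v u i ≠ 0} ≤
      (if l 1 ≤ |v i| / ‖v‖ then 1 else 0) + |v i| / ‖v‖ / l 1 := by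
  have hr0 : 0 ≤ |v i| / ‖v‖ := by positivity
  have hq0 : 0 ≤ |v i| / ‖v‖ / l 1 := div_nonneg hr0 hl.one_pos.le
  split_ifs with hr
  · linarith [measureReal_le_one (μ := unifCube d) (s := {u | quant l s v u i ≠ 0})]
  · push Not at hr
    have hsub :
        {u | quant l s v u i ≠ 0} ⊆ Function.eval i ⁻¹' Set.Iic (|v i| / ‖v‖ / l 1) := by
      intro u hu
      by_contra hup
      rw [Set.mem_preimage, Function.eval, Set.mem_Iic, ← hl.quantP_eq_div hr0 hr] at hup
      apply hu
      simp only [quant, PiLp.toLp_apply, if_neg hup, hl.levIdx_eq_zero hr0 hr, hl.1, mul_zero]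
    calc (unifCube d).real {u | quant l s v u i ≠ 0}
        ≤ (unifCube d).real (Function.eval i ⁻¹' Set.Iic (|v i| / ‖v‖ / l 1)) :=
          measureReal_mono hsub
      _ ≤ |v i| / ‖v‖ / l 1 := unifCube_real_eval_preimage_Iic_le i hq0
      _ = 0 + |v i| / ‖v‖ / l 1 := (zero_add _).symm

theorem sum_sq_abs_div_norm_le_one {d : ℕ} (v : EuclideanSpace ℝ (Fin d)) :
    ∑ i, (|v i| / ‖v‖) ^ 2 ≤ 1 := by
  simp_rw [div_pow, ← Finset.sum_div, EuclideanSpace.norm_sq_eq, Real.norm_eq_abs]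
  exact div_self_le_one _

theorem card_filter_le_mul_sq_le_sum_sq {ι : Type*} [Fintype ι] {r : ι → ℝ} {c : ℝ}
    (hc : 0 ≤ c) :
    (Finset.univ.filter fun i => c ≤ r i).card * c ^ 2 ≤ ∑ i, r i ^ 2 := by
  calc (Finset.univ.filter fun i => c ≤ r i).card * c ^ 2
      ≤ ∑ i ∈ Finset.univ.filter (fun i => c ≤ r i), r i ^ 2 := by
        rw [← nsmul_eq_mul]
        exact Finset.card_nsmul_le_sum _ _ _ fun i hi =>
          pow_le_pow_left₀ hc (Finset.mem_filter.mp hi).2 2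
    _ ≤ ∑ i, r i ^ 2 :=
        Finset.sum_le_sum_of_subset_of_nonneg (Finset.filter_subset _ _) fun i _ _ => sq_nonneg _

theorem sum_le_sqrt_card_of_sum_sq_le_one {ι : Type*} [Fintype ι] {r : ι → ℝ}
    (hr : ∑ i, r i ^ 2 ≤ 1) : ∑ i, r i ≤ √(Fintype.card ι) := by
  calc ∑ i, r i = ∑ i, 1 * r i := by simp
    _ ≤ √(∑ _i : ι, (1:ℝ) ^ 2) * √(∑ i, r i ^ 2) := Real.sum_mul_le_sqrt_mul_sqrt _ _ _
    _ ≤ √(Fintype.card ι) * 1 := by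
        simp only [one_pow, Finset.sum_const, Finset.card_univ, nsmul_eq_mul, mul_one]
        exact mul_le_of_le_one_right (Real.sqrt_nonneg _) (Real.sqrt_le_one.mpr hr)
    _ = √(Fintype.card ι) := mul_one _

theorem integral_ncard_quant_ne_zero_le {l : ℕ → ℝ} {s d : ℕ} (hl : IsLevels l s)
    (v : EuclideanSpace ℝ (Fin d)) :
    ∫ u, ({i : Fin d | quant l s v u i ≠ 0}.ncard : ℝ) ∂(unifCube d) ≤
      1 / l 1 ^ 2 + √d / l 1 := by
  set r : Fin d → ℝ := fun i => |v i| / ‖v‖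
  have hl1 := hl.one_pos
  have hsq : ∑ i, r i ^ 2 ≤ 1 := sum_sq_abs_div_norm_le_one v
  have hcard : ((Finset.univ.filter fun i => l 1 ≤ r i).card : ℝ) ≤ 1 / l 1 ^ 2 := by
    rw [le_div_iff₀ (by positivity)]
    exact (card_filter_le_mul_sq_le_sum_sq hl1.le).trans hsq
  have hsum : ∑ i, r i ≤ √d := by
    simpa using sum_le_sqrt_card_of_sum_sq_le_one hsq
  refine (integral_ncard_eq_sum_measureReal (A := fun i => {u | quant l s v u i ≠ 0})
    (measurableSet_quant_ne_zero l s v)).trans_le ?_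
  calc ∑ i, (unifCube d).real {u | quant l s v u i ≠ 0}
      ≤ ∑ i, ((if l 1 ≤ r i then 1 else 0) + r i / l 1) :=
        Finset.sum_le_sum fun i _ => unifCube_real_quant_ne_zero_le hl v i
    _ = (Finset.univ.filter fun i => l 1 ≤ r i).card + (∑ i, r i) / l 1 := by
        rw [Finset.sum_add_distrib, Finset.sum_boole, Finset.sum_div]
    _ ≤ 1 / l 1 ^ 2 + √d / l 1 := by gcongr

theorem isLevels_nuqLevels (s : ℕ) : IsLevels (nuqLevels s) s := by
  refine ⟨if_pos rfl, by simp [nuqLevels], fun j _ => ?_⟩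
  rcases Nat.eq_zero_or_pos j with rfl | hj
  · simp [nuqLevels]
  · simp only [nuqLevels, if_neg hj.ne', if_neg (Nat.succ_ne_zero j)]
    exact zpow_lt_zpow_right₀ one_lt_two (by push_cast; omega)

theorem nuqLevels_one (s : ℕ) : nuqLevels s 1 = 2 ^ (-(s : ℤ)) := by
  simp [nuqLevels]

theorem nuq_expected_sparsity_general (d s : ℕ)
    (v : EuclideanSpace ℝ (Fin d)) :
    (∫ u, (({i : Fin d | quant (nuqLevels s) s v u i ≠ 0}).ncard : ℝ) ∂(unifCube d)) ≤
      2 ^ (2 * s) + 2 ^ s * Real.sqrt d := by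
  refine (integral_ncard_quant_ne_zero_le (isLevels_nuqLevels s) v).trans_eq ?_
  rw [nuqLevels_one, zpow_neg, zpow_natCast, inv_pow, one_div, inv_inv, div_inv_eq_mul, pow_mul']
  ring

/-- **Lemma 5 (expected sparsity)**: with the NUQSGD levels, the expected number of nonzero
coordinates of `Q_s(v)` is at most `2^{2s} + 2^s √d`. -/
theorem nuq_expected_sparsity (d s : ℕ) (hd : 1 ≤ d) (hs : 1 ≤ s)
    (v : EuclideanSpace ℝ (Fin d)) (hv : v ≠ 0) :
    (∫ u, (({i : Fin d | quant (nuqLevels s) s v u i ≠ 0}).ncard : ℝ) ∂(unifCube d)) ≤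
      2 ^ (2 * s) + 2 ^ s * Real.sqrt d :=
  nuq_expected_sparsity_general d s v
end
end

section
/- Let d ≥ 1 and s ≥ 1 be integers, let L = (l_0, …, l_{s+1}) be any sequence of quantization levels, and set τ_j = l_{j+1} − l_j for j = 0, …, s. For every nonzero v ∈ ℝ^d, E[‖Q_s(v) − v‖²] ≤ ε_QP · ‖v‖², where ε_QP is the supremum of Σ_{j=0}^s z_j over all (x_0, …, x_s, z_0, …, z_s) ∈ ℝ^{2s+2} satisfying: x_j ≥ 0 for all j; Σ_{j=0}^s x_j ≤ d; d − Σ_{k=0}^j x_k ≤ (1/l_{j+1})² for j = 0, …, s−1; z_0 ≤ τ_0² x_0/4 and z_0² ≤ τ_0² x_0; and, for j = 1, …, s, z_j ≤ τ_j² x_j/4 and z_j² + τ_j² l_j² x_j² + 2 τ_j l_j x_j z_j ≤ τ_j² x_j. -/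
open MeasureTheory Real

noncomputable section

/-!
Write `rᵢ = |vᵢ|/‖v‖`, so that `∑ rᵢ² = 1`, and let `τ, p` be the gap and the rounding
probability at `rᵢ`. Coordinate `i` of `Q_s(v) - v` is `‖v‖·sign(vᵢ)` times a two-point rounding
error of `rᵢ`, whose second moment is `τ²p(1-p)`; by linearity the expected squared error is at
most `‖v‖² ∑ᵢ τ²p(1-p)`. Grouping the coordinates by the bin `j` of `rᵢ`, the bin sizes `xⱼ` and
the summed variances `zⱼ` are a feasible point of the QCQP with this objective value:
`p(1-p) ≤ 1/4` gives `zⱼ ≤ τⱼ²xⱼ/4`; `τ²p(1-p) ≤ τ²p = τ(rᵢ - lⱼ)` and Cauchy–Schwarz give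
`(zⱼ + τⱼlⱼxⱼ)² ≤ τⱼ²(∑_{bin j} rᵢ)² ≤ τⱼ²xⱼ ∑_{bin j} rᵢ² ≤ τⱼ²xⱼ`; and the coordinates beyond
bin `j` all have `rᵢ ≥ l_{j+1}`, so there are at most `1/l_{j+1}²` of them.
-/

open Set

def roundLevel (l : ℕ → ℝ) (s : ℕ) (r t : ℝ) : ℝ :=
  if t ≤ quantP l s r then l (levIdx l s r + 1) else l (levIdx l s r)

def quantVar (l : ℕ → ℝ) (s : ℕ) (r : ℝ) : ℝ :=
  (l (levIdx l s r + 1) - l (levIdx l s r)) ^ 2 * (quantP l s r * (1 - quantP l s r))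

def qcqpValues (l : ℕ → ℝ) (s d : ℕ) : Set ℝ :=
  {y : ℝ | ∃ x z : ℕ → ℝ,
    (∀ j ≤ s, 0 ≤ x j) ∧
    (∑ j ∈ Finset.range (s + 1), x j ≤ (d:ℝ)) ∧
    (∀ j < s, (d:ℝ) - ∑ k ∈ Finset.range (j + 1), x k ≤ (1 / l (j + 1)) ^ 2) ∧
    (z 0 ≤ (l 1 - l 0) ^ 2 * x 0 / 4) ∧
    ((z 0) ^ 2 ≤ (l 1 - l 0) ^ 2 * x 0) ∧
    (∀ j, 1 ≤ j → j ≤ s →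
      z j ≤ (l (j + 1) - l j) ^ 2 * x j / 4 ∧
      (z j) ^ 2 + (l (j + 1) - l j) ^ 2 * (l j) ^ 2 * (x j) ^ 2 +
          2 * (l (j + 1) - l j) * l j * x j * z j ≤ (l (j + 1) - l j) ^ 2 * x j) ∧
    y = ∑ j ∈ Finset.range (s + 1), z j}

instance : IsProbabilityMeasure (volume.restrict (Icc (0:ℝ) 1)) := ⟨by simp⟩

theorem integral_unifCube_comp_eval {d : ℕ} (i : Fin d) {f : ℝ → ℝ}
    (hf : AEStronglyMeasurable f (volume.restrict (Icc 0 1))) :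
    ∫ u, f (u i) ∂unifCube d = ∫ t in Icc (0:ℝ) 1, f t :=
  integral_comp_eval hf

theorem integrable_unifCube_comp_eval {d : ℕ} (i : Fin d) {f : ℝ → ℝ}
    (hf : Integrable f (volume.restrict (Icc 0 1))) :
    Integrable (fun u => f (u i)) (unifCube d) :=
  integrable_comp_eval hf

theorem setIntegral_Icc_ite_le {p : ℝ} (hp : p ∈ Icc (0:ℝ) 1) (A B : ℝ) :
    ∫ t in Icc (0:ℝ) 1, (if t ≤ p then A else B) = p * A + (1 - p) * B := by
  have hite : (fun t : ℝ => if t ≤ p then A else B) =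
      fun t => (Iic p).indicator (fun _ => A - B) t + B := by
    ext t; by_cases h : t ≤ p <;> simp [h]
  have hinter : Iic p ∩ Icc 0 1 = Icc 0 p := by
    ext t
    simp only [mem_inter_iff, mem_Iic, mem_Icc]
    exact ⟨fun h => ⟨h.2.1, h.1⟩, fun h => ⟨h.2, h.1, h.2.trans hp.2⟩⟩
  rw [hite, integral_add ((integrable_const _).indicator measurableSet_Iic) (integrable_const _),
    integral_indicator_const _ measurableSet_Iic, measureReal_restrict_apply measurableSet_Iic,
    hinter, Real.volume_real_Icc_of_le hp.1]
  simp only [sub_zero, smul_eq_mul, integral_const, probReal_univ, one_mul]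
  ring

theorem integrable_ite_le {μ : Measure ℝ} [IsFiniteMeasure μ] (p A B : ℝ) :
    Integrable (fun t => if t ≤ p then A else B) μ :=
  Integrable.piecewise (s := Iic p) measurableSet_Iic (integrable_const A).integrableOn
    (integrable_const B).integrableOn

section Levels

variable {l : ℕ → ℝ} {s : ℕ} {r : ℝ}

theorem levIdx_le_self (l : ℕ → ℝ) (s : ℕ) (r : ℝ) : levIdx l s r ≤ s :=
  csSup_le' fun _ hj => hj.1

theorem IsLevels.monotoneOn (hl : IsLevels l s) : MonotoneOn l (Iic (s + 1)) :=
  monotoneOn_of_le_succ ordConnected_Iic fun j _ _ hj => (hl.2.2 j (by simpa using hj)).le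

theorem IsLevels.nonneg (hl : IsLevels l s) {j : ℕ} (hj : j ≤ s + 1) : 0 ≤ l j :=
  hl.1 ▸ hl.monotoneOn (mem_Iic.2 (Nat.zero_le _)) (mem_Iic.2 hj) (Nat.zero_le j)

theorem IsLevels.pos (hl : IsLevels l s) {j : ℕ} (hj0 : 0 < j) (hj : j ≤ s + 1) : 0 < l j :=
  (hl.1 ▸ hl.2.2 0 (Nat.zero_le s)).trans_le <|
    hl.monotoneOn (mem_Iic.2 (by omega)) (mem_Iic.2 hj) hj0

theorem IsLevels.gap_pos (hl : IsLevels l s) (r : ℝ) :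
    0 < l (levIdx l s r + 1) - l (levIdx l s r) :=
  sub_pos.2 (hl.2.2 _ (levIdx_le_self l s r))

theorem IsLevels.level_levIdx_le (hl : IsLevels l s) (hr : 0 ≤ r) : l (levIdx l s r) ≤ r :=
  (Nat.sSup_mem (s := {j | j ≤ s ∧ l j ≤ r}) ⟨0, Nat.zero_le s, hl.1 ▸ hr⟩
    ⟨s, fun _ hj => hj.1⟩).2

theorem IsLevels.le_level_levIdx_succ (hl : IsLevels l s) (hr : r ≤ 1) :
    r ≤ l (levIdx l s r + 1) := by
  rcases (levIdx_le_self l s r).eq_or_lt with h | h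
  · rw [h, hl.2.1]
    exact hr
  · by_contra! hlt
    have : levIdx l s r + 1 ≤ levIdx l s r := le_csSup ⟨s, fun _ hj => hj.1⟩ ⟨h, hlt.le⟩
    omega

theorem IsLevels.quantP_mul_gap (hl : IsLevels l s) (r : ℝ) :
    quantP l s r * (l (levIdx l s r + 1) - l (levIdx l s r)) = r - l (levIdx l s r) :=
  div_mul_cancel₀ _ (hl.gap_pos r).ne'

theorem IsLevels.quantP_mem_Icc (hl : IsLevels l s) (hr0 : 0 ≤ r) (hr1 : r ≤ 1) :
    quantP l s r ∈ Icc 0 1 :=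
  ⟨div_nonneg (sub_nonneg.2 (hl.level_levIdx_le hr0)) (hl.gap_pos r).le,
    (div_le_one (hl.gap_pos r)).2 (sub_le_sub_right (hl.le_level_levIdx_succ hr1) _)⟩

theorem quantVar_le (l : ℕ → ℝ) (s : ℕ) (r : ℝ) :
    quantVar l s r ≤ (l (levIdx l s r + 1) - l (levIdx l s r)) ^ 2 / 4 := by
  unfold quantVar
  nlinarith [sq_nonneg (quantP l s r - 1 / 2),
    sq_nonneg (l (levIdx l s r + 1) - l (levIdx l s r))]

theorem IsLevels.quantVar_nonneg (hl : IsLevels l s) (hr0 : 0 ≤ r) (hr1 : r ≤ 1) :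
    0 ≤ quantVar l s r := by
  obtain ⟨hp0, hp1⟩ := hl.quantP_mem_Icc hr0 hr1
  unfold quantVar
  have : 0 ≤ 1 - quantP l s r := sub_nonneg.2 hp1
  positivity

theorem IsLevels.quantVar_add_le (hl : IsLevels l s) (r : ℝ) :
    quantVar l s r + (l (levIdx l s r + 1) - l (levIdx l s r)) * l (levIdx l s r) ≤
      (l (levIdx l s r + 1) - l (levIdx l s r)) * r := by
  have h := hl.quantP_mul_gap r
  unfold quantVar
  linear_combination (l (levIdx l s r + 1) - l (levIdx l s r)) * h +
    sq_nonneg (quantP l s r * (l (levIdx l s r + 1) - l (levIdx l s r)))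

end Levels

theorem integrable_sq_roundLevel_sub (l : ℕ → ℝ) (s : ℕ) (r : ℝ) {μ : Measure ℝ}
    [IsFiniteMeasure μ] : Integrable (fun t => (roundLevel l s r t - r) ^ 2) μ := by
  simp only [roundLevel, apply_ite (fun a => (a - r) ^ 2)]
  exact integrable_ite_le _ _ _

theorem IsLevels.setIntegral_sq_roundLevel_sub (hl : IsLevels l s) (hr0 : 0 ≤ r) (hr1 : r ≤ 1) :
    ∫ t in Icc (0:ℝ) 1, (roundLevel l s r t - r) ^ 2 = quantVar l s r := by
  have h := hl.quantP_mul_gap r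
  simp only [roundLevel, apply_ite (fun a => (a - r) ^ 2)]
  rw [setIntegral_Icc_ite_le (hl.quantP_mem_Icc hr0 hr1), quantVar]
  linear_combination (quantP l s r * (l (levIdx l s r + 1) - l (levIdx l s r)) -
    (r - l (levIdx l s r))) * h

section Bins

variable {ι : Type*} {l : ℕ → ℝ} {s : ℕ} (r : ι → ℝ)

theorem sum_quantVar_le_of_levIdx_eq (B : Finset ι) {j : ℕ}
    (hB : ∀ i ∈ B, levIdx l s (r i) = j) :
    ∑ i ∈ B, quantVar l s (r i) ≤ (l (j + 1) - l j) ^ 2 * B.card / 4 := by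
  calc ∑ i ∈ B, quantVar l s (r i) ≤ B.card • ((l (j + 1) - l j) ^ 2 / 4) :=
        Finset.sum_le_card_nsmul _ _ _ fun i hi => by
          rw [← hB i hi]
          exact quantVar_le l s (r i)
    _ = (l (j + 1) - l j) ^ 2 * B.card / 4 := by
        rw [nsmul_eq_mul]
        ring

theorem IsLevels.sq_sum_quantVar_add_le (hl : IsLevels l s) (B : Finset ι) {j : ℕ}
    (hr0 : ∀ i ∈ B, 0 ≤ r i) (hr1 : ∀ i ∈ B, r i ≤ 1) (hB : ∀ i ∈ B, levIdx l s (r i) = j)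
    (hrB : ∑ i ∈ B, r i ^ 2 ≤ 1) :
    (∑ i ∈ B, quantVar l s (r i) + (l (j + 1) - l j) * l j * B.card) ^ 2 ≤
      (l (j + 1) - l j) ^ 2 * B.card := by
  have hsum : ∑ i ∈ B, quantVar l s (r i) + (l (j + 1) - l j) * l j * B.card =
      ∑ i ∈ B, (quantVar l s (r i) + (l (j + 1) - l j) * l j) := by
    rw [Finset.sum_add_distrib, Finset.sum_const, nsmul_eq_mul]
    ring
  have hterm_nonneg : ∀ i ∈ B, 0 ≤ quantVar l s (r i) + (l (j + 1) - l j) * l j := by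
    intro i hi
    rw [← hB i hi]
    have := hl.gap_pos (r i)
    have := hl.nonneg (Nat.le_succ_of_le (levIdx_le_self l s (r i)))
    have := hl.quantVar_nonneg (hr0 i hi) (hr1 i hi)
    positivity
  have hterm_le : ∀ i ∈ B, quantVar l s (r i) + (l (j + 1) - l j) * l j ≤
      (l (j + 1) - l j) * r i := fun i hi => hB i hi ▸ hl.quantVar_add_le (r i)
  calc (∑ i ∈ B, quantVar l s (r i) + (l (j + 1) - l j) * l j * B.card) ^ 2
      ≤ ((l (j + 1) - l j) * ∑ i ∈ B, r i) ^ 2 := by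
        rw [hsum, Finset.mul_sum]
        exact pow_le_pow_left₀ (Finset.sum_nonneg hterm_nonneg) (Finset.sum_le_sum hterm_le) 2
    _ ≤ (l (j + 1) - l j) ^ 2 * (B.card * ∑ i ∈ B, r i ^ 2) := by
        rw [mul_pow]
        gcongr
        exact sq_sum_le_card_mul_sum_sq
    _ ≤ (l (j + 1) - l j) ^ 2 * (B.card * 1) := by gcongr
    _ = (l (j + 1) - l j) ^ 2 * B.card := by rw [mul_one]

theorem IsLevels.card_lt_levIdx_mul_sq_le [Fintype ι] (hl : IsLevels l s) (hr0 : ∀ i, 0 ≤ r i)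
    (j : ℕ) : (Finset.univ.filter fun i => j < levIdx l s (r i)).card * l (j + 1) ^ 2 ≤
      ∑ i, r i ^ 2 := by
  calc _ = ∑ i ∈ Finset.univ.filter (fun i => j < levIdx l s (r i)), l (j + 1) ^ 2 := by
        rw [Finset.sum_const, nsmul_eq_mul]
    _ ≤ ∑ i ∈ Finset.univ.filter (fun i => j < levIdx l s (r i)), r i ^ 2 := by
        refine Finset.sum_le_sum fun i hi => ?_
        have hji := (Finset.mem_filter.1 hi).2
        have hJs := levIdx_le_self l s (r i)
        have hmono : l (j + 1) ≤ l (levIdx l s (r i)) :=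
          hl.monotoneOn (mem_Iic.2 (by omega)) (mem_Iic.2 (by omega)) hji
        exact pow_le_pow_left₀ (hl.nonneg (by omega)) (hmono.trans (hl.level_levIdx_le (hr0 i))) 2
    _ ≤ ∑ i, r i ^ 2 :=
        Finset.sum_le_sum_of_subset_of_nonneg (Finset.subset_univ _) fun i _ _ => sq_nonneg _

end Bins

theorem bddAbove_qcqpValues (l : ℕ → ℝ) (s d : ℕ) : BddAbove (qcqpValues l s d) := by
  refine ⟨∑ j ∈ Finset.range (s + 1), (l (j + 1) - l j) ^ 2 * d / 4, ?_⟩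
  rintro _ ⟨x, z, hx0, hxd, -, hz0, -, hz, rfl⟩
  refine Finset.sum_le_sum fun j hj => ?_
  have hjs : j ≤ s := Nat.lt_succ_iff.1 (Finset.mem_range.1 hj)
  have hxj : x j ≤ d := (Finset.single_le_sum
    (fun k hk => hx0 k (Nat.lt_succ_iff.1 (Finset.mem_range.1 hk))) hj).trans hxd
  have hzj : z j ≤ (l (j + 1) - l j) ^ 2 * x j / 4 := by
    rcases j.eq_zero_or_pos with rfl | hj0
    · exact hz0
    · exact (hz j hj0 hjs).1
  exact hzj.trans (by gcongr)

theorem IsLevels.sum_quantVar_mem_qcqpValues {ι : Type*} [Fintype ι] {l : ℕ → ℝ} {s : ℕ}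
    (hl : IsLevels l s) (r : ι → ℝ) (hr0 : ∀ i, 0 ≤ r i) (hr : ∑ i, r i ^ 2 = 1) :
    ∑ i, quantVar l s (r i) ∈ qcqpValues l s (Fintype.card ι) := by
  classical
  set J : ι → ℕ := fun i => levIdx l s (r i)
  have hr1 : ∀ i, r i ≤ 1 := fun i => (sq_le_one_iff₀ (hr0 i)).1 <|
    hr ▸ Finset.single_le_sum (fun k _ => sq_nonneg (r k)) (Finset.mem_univ i)
  have hrB : ∀ B : Finset ι, ∑ i ∈ B, r i ^ 2 ≤ 1 := fun B => hr ▸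
    Finset.sum_le_sum_of_subset_of_nonneg (Finset.subset_univ B) fun i _ _ => sq_nonneg (r i)
  have hJ : ∀ i ∈ Finset.univ, J i ∈ Finset.range (s + 1) :=
    fun i _ => Finset.mem_range.2 (Nat.lt_succ_of_le (levIdx_le_self l s (r i)))
  have hz := fun j => sum_quantVar_le_of_levIdx_eq r (Finset.univ.filter fun i => J i = j)
    fun i hi => (Finset.mem_filter.1 hi).2
  have hcs := fun j => hl.sq_sum_quantVar_add_le r (Finset.univ.filter fun i => J i = j)
    (fun i _ => hr0 i) (fun i _ => hr1 i) (fun i hi => (Finset.mem_filter.1 hi).2) (hrB _)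
  refine ⟨fun j => (Finset.univ.filter fun i => J i = j).card,
    fun j => ∑ i ∈ Finset.univ.filter (fun i => J i = j), quantVar l s (r i),
    fun j _ => Nat.cast_nonneg _, ?_, ?_, hz 0, ?_,
    fun j _ _ => ⟨hz j, by linear_combination hcs j⟩, (Finset.sum_fiberwise_of_maps_to hJ _).symm⟩
  · rw [← Nat.cast_sum, ← Finset.card_eq_sum_card_fiberwise hJ, Finset.card_univ]
  · intro j hj
    have htail : (Fintype.card ι : ℝ) - ∑ k ∈ Finset.range (j + 1),
        ((Finset.univ.filter fun i => J i = k).card : ℝ) =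
        (Finset.univ.filter fun i => j < J i).card := by
      rw [← Nat.cast_sum, Finset.sum_card_fiberwise_eq_card_filter, ← Finset.card_univ,
        ← Finset.card_filter_add_card_filter_not (s := Finset.univ) (fun i => J i ∈ Finset.range (j + 1))]
      simp [Finset.mem_range]
    rw [htail, div_pow, one_pow, le_div_iff₀ (pow_pos (hl.pos j.succ_pos (by omega)) 2), ← hr]
    exact hl.card_lt_levIdx_mul_sq_le r hr0 j
  · simpa [hl.1] using hcs 0

theorem Real.sign_mul_abs (x : ℝ) : Real.sign x * |x| = x := by
  rcases lt_trichotomy x 0 with h | rfl | h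
  · rw [Real.sign_of_neg h, abs_of_neg h, neg_one_mul, neg_neg]
  · rw [abs_zero, mul_zero]
  · rw [Real.sign_of_pos h, abs_of_pos h, one_mul]

theorem Real.sign_sq_le_one (x : ℝ) : Real.sign x ^ 2 ≤ 1 := by
  rcases Real.sign_apply_eq x with h | h | h <;> norm_num [h]

theorem quant_apply_sub {l : ℕ → ℝ} {s d : ℕ} {v : EuclideanSpace ℝ (Fin d)} (hv : v ≠ 0)
    (u : Fin d → ℝ) (i : Fin d) :
    quant l s v u i - v i =
      ‖v‖ * Real.sign (v i) * (roundLevel l s (|v i| / ‖v‖) (u i) - |v i| / ‖v‖) := by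
  have hv0 : ‖v‖ ≠ 0 := norm_ne_zero_iff.2 hv
  have hvi : ‖v‖ * Real.sign (v i) * (|v i| / ‖v‖) = v i := by
    rw [mul_comm ‖v‖, mul_assoc, mul_div_cancel₀ _ hv0, Real.sign_mul_abs]
  rw [mul_sub, hvi]
  rfl

theorem IsLevels.integral_norm_quant_sub_sq_le {l : ℕ → ℝ} {s d : ℕ} (hl : IsLevels l s)
    {v : EuclideanSpace ℝ (Fin d)} (hv : v ≠ 0) :
    ∫ u, ‖quant l s v u - v‖ ^ 2 ∂unifCube d ≤ ‖v‖ ^ 2 * ∑ i, quantVar l s (|v i| / ‖v‖) := by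
  have hv0 : 0 < ‖v‖ := norm_pos_iff.2 hv
  have hr0 : ∀ i, 0 ≤ |v i| / ‖v‖ := fun i => by positivity
  have hr1 : ∀ i, |v i| / ‖v‖ ≤ 1 := fun i =>
    (div_le_one hv0).2 (by simpa using PiLp.norm_apply_le v i)
  have hcoord : ∀ i, ∫ u, (quant l s v u i - v i) ^ 2 ∂unifCube d =
      (‖v‖ * Real.sign (v i)) ^ 2 * quantVar l s (|v i| / ‖v‖) := by
    intro i
    simp_rw [quant_apply_sub hv, mul_pow _ (roundLevel _ _ _ _ - _)]
    rw [integral_const_mul,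
      integral_unifCube_comp_eval i (integrable_sq_roundLevel_sub l s _).aestronglyMeasurable,
      hl.setIntegral_sq_roundLevel_sub (hr0 i) (hr1 i)]
  have hint : ∀ i, Integrable (fun u => (quant l s v u i - v i) ^ 2) (unifCube d) := by
    intro i
    simp_rw [quant_apply_sub hv, mul_pow _ (roundLevel _ _ _ _ - _)]
    exact (integrable_unifCube_comp_eval i (integrable_sq_roundLevel_sub l s _)).const_mul _
  have hnorm : ∀ u, ‖quant l s v u - v‖ ^ 2 = ∑ i, (quant l s v u i - v i) ^ 2 := fun u => by
    rw [EuclideanSpace.real_norm_sq_eq]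
    rfl
  simp_rw [hnorm]
  rw [integral_finsetSum _ fun i _ => hint i, Finset.mul_sum]
  refine Finset.sum_le_sum fun i _ => ?_
  rw [hcoord, mul_pow, mul_right_comm]
  exact mul_le_of_le_one_right (mul_nonneg (sq_nonneg _) (hl.quantVar_nonneg (hr0 i) (hr1 i)))
    (Real.sign_sq_le_one _)

theorem nuq_variance_QCQP_bound_general (d s : ℕ)
    (l : ℕ → ℝ) (hl : IsLevels l s)
    (v : EuclideanSpace ℝ (Fin d)) (hv : v ≠ 0) :
    (∫ u, ‖quant l s v u - v‖ ^ 2 ∂(unifCube d)) ≤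
      sSup {y : ℝ | ∃ x z : ℕ → ℝ,
        (∀ j ≤ s, 0 ≤ x j) ∧
        (∑ j ∈ Finset.range (s + 1), x j ≤ (d:ℝ)) ∧
        (∀ j < s, (d:ℝ) - ∑ k ∈ Finset.range (j + 1), x k ≤ (1 / l (j + 1)) ^ 2) ∧
        (z 0 ≤ (l 1 - l 0) ^ 2 * x 0 / 4) ∧
        ((z 0) ^ 2 ≤ (l 1 - l 0) ^ 2 * x 0) ∧
        (∀ j, 1 ≤ j → j ≤ s →
          z j ≤ (l (j + 1) - l j) ^ 2 * x j / 4 ∧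
          (z j) ^ 2 + (l (j + 1) - l j) ^ 2 * (l j) ^ 2 * (x j) ^ 2 +
              2 * (l (j + 1) - l j) * l j * x j * z j ≤ (l (j + 1) - l j) ^ 2 * x j) ∧
        y = ∑ j ∈ Finset.range (s + 1), z j} * ‖v‖ ^ 2 := by
  have hv0 : 0 < ‖v‖ := norm_pos_iff.2 hv
  have hr : ∑ i, (|v i| / ‖v‖) ^ 2 = 1 := by
    simp_rw [div_pow, sq_abs, ← Finset.sum_div, ← EuclideanSpace.real_norm_sq_eq]
    exact div_self (by positivity)
  have hmem : ∑ i, quantVar l s (|v i| / ‖v‖) ∈ qcqpValues l s d := by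
    simpa only [Fintype.card_fin] using
      hl.sum_quantVar_mem_qcqpValues (fun i => |v i| / ‖v‖) (fun i => by positivity) hr
  calc ∫ u, ‖quant l s v u - v‖ ^ 2 ∂unifCube d
      ≤ ‖v‖ ^ 2 * ∑ i, quantVar l s (|v i| / ‖v‖) := hl.integral_norm_quant_sub_sq_le hv
    _ ≤ ‖v‖ ^ 2 * sSup (qcqpValues l s d) := by
        gcongr
        exact le_csSup (bddAbove_qcqpValues l s d) hmem
    _ = _ := mul_comm _ _

/-- **Theorem 5 (QCQP bound)**: for any levels `L`, with `τⱼ = l_{j+1} − lⱼ`,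
`E[‖Q_s(v) − v‖²] ≤ ε_QP ‖v‖²`, where `ε_QP` is the optimal value of the quadratically
constrained quadratic program `max Σⱼ zⱼ` subject to `xⱼ ≥ 0`, `Σⱼ xⱼ ≤ d`,
`d − Σ_{k=0}^{j} x_k ≤ (1/l_{j+1})²` for `j ≤ s−1`, `z₀ ≤ τ₀²x₀/4`, `z₀² ≤ τ₀²x₀`, and for
`j = 1, …, s`: `zⱼ ≤ τⱼ²xⱼ/4` and `zⱼ² + τⱼ²lⱼ²xⱼ² + 2τⱼlⱼxⱼzⱼ ≤ τⱼ²xⱼ`. -/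
theorem nuq_variance_QCQP_bound (d s : ℕ) (hd : 1 ≤ d) (hs : 1 ≤ s)
    (l : ℕ → ℝ) (hl : IsLevels l s)
    (v : EuclideanSpace ℝ (Fin d)) (hv : v ≠ 0) :
    (∫ u, ‖quant l s v u - v‖ ^ 2 ∂(unifCube d)) ≤
      sSup {y : ℝ | ∃ x z : ℕ → ℝ,
        (∀ j ≤ s, 0 ≤ x j) ∧
        (∑ j ∈ Finset.range (s + 1), x j ≤ (d:ℝ)) ∧
        (∀ j < s, (d:ℝ) - ∑ k ∈ Finset.range (j + 1), x k ≤ (1 / l (j + 1)) ^ 2) ∧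
        (z 0 ≤ (l 1 - l 0) ^ 2 * x 0 / 4) ∧
        ((z 0) ^ 2 ≤ (l 1 - l 0) ^ 2 * x 0) ∧
        (∀ j, 1 ≤ j → j ≤ s →
          z j ≤ (l (j + 1) - l j) ^ 2 * x j / 4 ∧
          (z j) ^ 2 + (l (j + 1) - l j) ^ 2 * (l j) ^ 2 * (x j) ^ 2 +
              2 * (l (j + 1) - l j) * l j * x j * z j ≤ (l (j + 1) - l j) ^ 2 * x j) ∧
        y = ∑ j ∈ Finset.range (s + 1), z j} * ‖v‖ ^ 2 :=
  nuq_variance_QCQP_bound_general d s l hl v hv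
end
end
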